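/- arXiv:2408.03405 — 2 statements merged into one kernel-verified Lean document; each statement's English description precedes it below -/
import Mathlib

section
/- Let there be N arms and, for each time t ∈ {1,...,T}, a pulled-arm count c_{t,n} ∈ ℕ such that each c_{t,n} counts cumulative pulls of arm n through time t, with A agents each pulling exactly one arm per time step (so ∑_n c_{T,n} = A·T and the assignment at time t increments c by 1 for each of A distinct arms). Then ∑_{t=1}^T ∑_{a=1}^A 1/√(c_{t, f_t(a)}) < 2√(A·N·T), where f_t(a) is the arm pulled by agent a at time t. -/
open Finset

private lemma sum_inv_sqrt_le_aux (m : ℕ) (hm : 1 ≤ m) :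
    (∑ k ∈ Finset.Icc 1 m, 1 / Real.sqrt k) ≤ 2 * Real.sqrt m - 1 := by
  induction m with
  | zero => omega
  | succ m ih =>
    rcases Nat.lt_or_ge 1 (m + 1) with h | h
    · have hm1 : 1 ≤ m := by omega
      have ihm := ih hm1
      rw [Finset.sum_Icc_succ_top (by omega : 1 ≤ m + 1)]
      have hu : (0:ℝ) < Real.sqrt (m + 1) := Real.sqrt_pos.2 (by positivity)
      have hs : (0:ℝ) ≤ Real.sqrt m := Real.sqrt_nonneg _
      have hu2 : Real.sqrt ((m:ℝ) + 1) ^ 2 = (m:ℝ) + 1 := Real.sq_sqrt (by positivity)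
      have hs2 : Real.sqrt (m:ℝ) ^ 2 = (m:ℝ) := Real.sq_sqrt (by positivity)
      have key : 1 / Real.sqrt ((m:ℝ) + 1)
          ≤ 2 * Real.sqrt ((m:ℝ) + 1) - 2 * Real.sqrt (m:ℝ) := by
        rw [div_le_iff₀ hu]
        nlinarith [sq_nonneg (Real.sqrt (m:ℝ) - Real.sqrt ((m:ℝ)+1))]
      push_cast
      push_cast at ihm
      linarith
    · have : m = 0 := by omega
      subst this
      norm_num

/-- If `A` agents each pull exactly one distinct arm (out of `N`) per time step, and
`c t n` is the cumulative number of pulls of arm `n` through time `t`, then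
`∑_{t=1}^T ∑_{a=1}^A 1/√(c t (f t a)) < 2√(A·N·T)`, where `f t a` is the arm pulled by
agent `a` at time `t`. -/
theorem sum_inv_sqrt_counts_lt (N T A : ℕ) (hN : 1 ≤ N) (hT : 1 ≤ T) (hA : 1 ≤ A)
    (hAN : A ≤ N)
    (f : ℕ → Fin A → Fin N) (hinj : ∀ t, Function.Injective (f t))
    (c : ℕ → Fin N → ℕ)
    (hc : ∀ t n, c t n = ∑ τ ∈ Finset.Icc 1 t, ∑ a, if f τ a = n then 1 else 0) :
    (∑ t ∈ Finset.Icc 1 T, ∑ a, 1 / Real.sqrt (c t (f t a)))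
      < 2 * Real.sqrt ((A : ℝ) * N * T) := by
  classical
  -- `c t n` as a cardinality of pull times
  have hcard : ∀ t n, c t n = ((Finset.Icc 1 t).filter (fun τ => ∃ a, f τ a = n)).card := by
    intro t n
    rw [hc, Finset.card_filter]
    refine Finset.sum_congr rfl fun τ _ => ?_
    by_cases h : ∃ a, f τ a = n
    · obtain ⟨a, ha⟩ := h
      rw [Finset.sum_eq_single a]
      · rw [if_pos ha, if_pos ⟨a, ha⟩]
      · intro b _ hb
        have : f τ b ≠ n := fun hbn => hb (hinj τ (hbn.trans ha.symm))
        simp [this]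
      · simp
    · have : ∀ a : Fin A, f τ a ≠ n := fun a ha => h ⟨a, ha⟩
      simp [this, h]
  have hmono : ∀ n, ∀ s t : ℕ, s ≤ t → c s n ≤ c t n := by
    intro n s t hst
    rw [hcard, hcard]
    exact Finset.card_le_card (Finset.filter_subset_filter _
      (Finset.Icc_subset_Icc_right hst))
  -- rewrite the double sum arm-by-arm
  set S : Fin N → Finset ℕ := fun n => (Finset.Icc 1 T).filter (fun τ => ∃ a, f τ a = n)
    with hS
  have hswap : (∑ t ∈ Finset.Icc 1 T, ∑ a, 1 / Real.sqrt (c t (f t a)))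
      = ∑ n : Fin N, ∑ t ∈ S n, 1 / Real.sqrt (c t n) := by
    have h1 : ∀ t, (∑ a, 1 / Real.sqrt (c t (f t a)))
        = ∑ n ∈ Finset.univ.filter (fun n => ∃ a, f t a = n), 1 / Real.sqrt (c t n) := by
      intro t
      have himg : Finset.univ.image (f t)
          = Finset.univ.filter (fun n => ∃ a, f t a = n) := by
        ext n; simp
      rw [← himg, Finset.sum_image (fun a _ b _ h => hinj t h)]
    calc (∑ t ∈ Finset.Icc 1 T, ∑ a, 1 / Real.sqrt (c t (f t a)))
        = ∑ t ∈ Finset.Icc 1 T, ∑ n : Fin N,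
            (if ∃ a, f t a = n then 1 / Real.sqrt (c t n) else 0) := by
          refine Finset.sum_congr rfl fun t _ => ?_
          rw [h1 t, Finset.sum_filter]
      _ = ∑ n : Fin N, ∑ t ∈ Finset.Icc 1 T,
            (if ∃ a, f t a = n then 1 / Real.sqrt (c t n) else 0) := Finset.sum_comm
      _ = ∑ n : Fin N, ∑ t ∈ S n, 1 / Real.sqrt (c t n) := by
          refine Finset.sum_congr rfl fun n _ => ?_
          rw [hS, Finset.sum_filter]
  -- per-arm reindexing to Icc 1 (c T n)
  have hreindex : ∀ n : Fin N, (∑ t ∈ S n, 1 / Real.sqrt (c t n))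
      = ∑ k ∈ Finset.Icc 1 (c T n), 1 / Real.sqrt k := by
    intro n
    have hmem : ∀ t ∈ S n, c t n ∈ Finset.Icc 1 (c T n) := by
      intro t ht
      rw [hS, Finset.mem_filter, Finset.mem_Icc] at ht
      obtain ⟨⟨ht1, htT⟩, hpull⟩ := ht
      refine Finset.mem_Icc.2 ⟨?_, hmono n t T htT⟩
      rw [hcard]
      refine Finset.card_pos.2 ⟨t, Finset.mem_filter.2 ⟨Finset.mem_Icc.2 ⟨ht1, le_refl t⟩, hpull⟩⟩
    have hlt : ∀ t₁ t₂, t₁ ∈ S n → t₂ ∈ S n → t₁ < t₂ → c t₁ n < c t₂ n := by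
      intro t₁ t₂ h₁ h₂ hlt
      rw [hS, Finset.mem_filter, Finset.mem_Icc] at h₁ h₂
      rw [hcard, hcard]
      refine Finset.card_lt_card ?_
      rw [Finset.ssubset_iff_of_subset
        (Finset.filter_subset_filter _ (Finset.Icc_subset_Icc_right hlt.le))]
      exact ⟨t₂, Finset.mem_filter.2 ⟨Finset.mem_Icc.2 ⟨h₂.1.1, le_refl _⟩, h₂.2⟩,
        fun h => by
          have := (Finset.mem_filter.1 h).1
          rw [Finset.mem_Icc] at this
          omega⟩
    have hinj2 : ∀ t₁ t₂, t₁ ∈ S n → t₂ ∈ S n → c t₁ n = c t₂ n → t₁ = t₂ := by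
      intro t₁ t₂ h₁ h₂ heq
      rcases lt_trichotomy t₁ t₂ with h | h | h
      · exact absurd heq (hlt t₁ t₂ h₁ h₂ h).ne
      · exact h
      · exact absurd heq.symm (hlt t₂ t₁ h₂ h₁ h).ne
    have hScard : (S n).card = c T n := (hcard T n).symm
    have hsurj := Finset.surj_on_of_inj_on_of_card_le
      (s := S n) (t := Finset.Icc 1 (c T n))
      (fun t _ => c t n) (fun t ht => hmem t ht)
      (fun t₁ t₂ h₁ h₂ h => hinj2 t₁ t₂ h₁ h₂ h)
      (by rw [hScard, Nat.card_Icc]; omega)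
    refine Finset.sum_bij (fun t _ => c t n) hmem
      (fun t₁ h₁ t₂ h₂ h => hinj2 t₁ t₂ h₁ h₂ h)
      (fun k hk => by obtain ⟨t, ht, hkt⟩ := hsurj k hk; exact ⟨t, ht, hkt.symm⟩)
      (fun t _ => rfl)
  -- there is at least one pulled arm
  obtain ⟨n0, hn0⟩ : ∃ n0 : Fin N, 1 ≤ c T n0 := by
    refine ⟨f 1 ⟨0, hA⟩, ?_⟩
    calc 1 ≤ c 1 (f 1 ⟨0, hA⟩) := by
          rw [hcard]
          exact Finset.card_pos.2 ⟨1, Finset.mem_filter.2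
            ⟨Finset.mem_Icc.2 ⟨le_refl 1, le_refl 1⟩, ⟨⟨0, hA⟩, rfl⟩⟩⟩
      _ ≤ c T (f 1 ⟨0, hA⟩) := hmono _ 1 T hT
  -- per-arm bounds
  have hbound : ∀ n : Fin N,
      (∑ k ∈ Finset.Icc 1 (c T n), 1 / Real.sqrt k) ≤ 2 * Real.sqrt (c T n) := by
    intro n
    rcases Nat.eq_zero_or_pos (c T n) with h | h
    · simp [h]
    · have := sum_inv_sqrt_le_aux (c T n) h
      linarith
  have hbound0 : (∑ k ∈ Finset.Icc 1 (c T n0), 1 / Real.sqrt k)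
      < 2 * Real.sqrt (c T n0) := by
    have := sum_inv_sqrt_le_aux (c T n0) hn0
    linarith
  -- total count
  have htotal : (∑ n : Fin N, (c T n : ℝ)) = (A : ℝ) * T := by
    have : (∑ n : Fin N, c T n) = A * T := by
      calc (∑ n : Fin N, c T n)
          = ∑ n : Fin N, ∑ τ ∈ Finset.Icc 1 T, ∑ a, (if f τ a = n then 1 else 0) := by
            exact Finset.sum_congr rfl fun n _ => hc T n
        _ = ∑ τ ∈ Finset.Icc 1 T, ∑ a : Fin A, ∑ n : Fin N,
              (if f τ a = n then 1 else 0) := by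
            rw [Finset.sum_comm]
            exact Finset.sum_congr rfl fun τ _ => Finset.sum_comm
        _ = ∑ τ ∈ Finset.Icc 1 T, ∑ a : Fin A, 1 := by
            refine Finset.sum_congr rfl fun τ _ => Finset.sum_congr rfl fun a _ => ?_
            simp
        _ = A * T := by simp [Nat.card_Icc, mul_comm]
    calc (∑ n : Fin N, (c T n : ℝ)) = ((∑ n : Fin N, c T n : ℕ) : ℝ) := by push_cast; ring
      _ = ((A * T : ℕ) : ℝ) := by rw [this]
      _ = (A : ℝ) * T := by push_cast; ring
  -- Cauchy-Schwarz
  have hCS : (∑ n : Fin N, Real.sqrt (c T n)) ≤ Real.sqrt ((N : ℝ) * ((A:ℝ) * T)) := by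
    rw [Real.le_sqrt (by positivity) (by positivity)]
    calc (∑ n : Fin N, Real.sqrt (c T n)) ^ 2
        = (∑ n : Fin N, 1 * Real.sqrt (c T n)) ^ 2 := by simp
      _ ≤ (∑ _n : Fin N, (1:ℝ) ^ 2) * ∑ n : Fin N, Real.sqrt (c T n) ^ 2 :=
          Finset.sum_mul_sq_le_sq_mul_sq _ _ _
      _ = (N : ℝ) * ∑ n : Fin N, ((c T n : ℕ) : ℝ) := by
          rw [Finset.sum_congr rfl (fun (n : Fin N) _ =>
            Real.sq_sqrt (by positivity : (0:ℝ) ≤ ((c T n : ℕ) : ℝ)))]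
          simp [Finset.card_univ]
      _ = (N : ℝ) * ((A:ℝ) * T) := by rw [htotal]
  -- combine
  have hmain : (∑ n : Fin N, ∑ k ∈ Finset.Icc 1 (c T n), 1 / Real.sqrt k)
      < ∑ n : Fin N, 2 * Real.sqrt (c T n) :=
    Finset.sum_lt_sum (fun n _ => hbound n) ⟨n0, Finset.mem_univ _, hbound0⟩
  have hfinal : ((A : ℝ) * N * T) = (N : ℝ) * ((A:ℝ) * T) := by ring
  calc (∑ t ∈ Finset.Icc 1 T, ∑ a, 1 / Real.sqrt (c t (f t a)))
      = ∑ n : Fin N, ∑ k ∈ Finset.Icc 1 (c T n), 1 / Real.sqrt k := by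
        rw [hswap]; exact Finset.sum_congr rfl fun n _ => hreindex n
    _ < ∑ n : Fin N, 2 * Real.sqrt (c T n) := hmain
    _ = 2 * ∑ n : Fin N, Real.sqrt (c T n) := by rw [Finset.mul_sum]
    _ ≤ 2 * Real.sqrt ((N : ℝ) * ((A:ℝ) * T)) := by linarith
    _ = 2 * Real.sqrt ((A : ℝ) * N * T) := by rw [hfinal]
end

section
/- The cumulative regret of Min-Width satisfies, with probability greater than 1 − δ: R_T < A(N−1) + 2√(2·A·N·T·ln(2N·G(T,A)/δ)) · (max S / min S), where G(T,A) = ∑_{t=1}^T C(t+A−1, A−1), assuming the concentration event {for all n, t: |μ̂_{t,n} − μ_n| < ε_{t,n}} holds with probability > 1 − δ and the algorithm selects at each time the injective assignment maximizing ∑_a s_a·UCB_{t,f(a)} with agents assigned greedily by sensitivity. -/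
lemma aux_sum_inv_sqrt (K : ℕ) :
    ∑ j ∈ Finset.Icc 1 K, (1:ℝ) / Real.sqrt j ≤ 2 * Real.sqrt K := by
  induction K with
  | zero => simp
  | succ K ih =>
    rw [Finset.sum_Icc_succ_top (by omega)]
    have hx : Real.sqrt K ^ 2 = K := Real.sq_sqrt (by positivity)
    have hy : Real.sqrt ((K:ℝ)+1) ^ 2 = (K:ℝ)+1 := Real.sq_sqrt (by positivity)
    have hy0 : 0 < Real.sqrt ((K:ℝ)+1) := Real.sqrt_pos.mpr (by positivity)
    have hx0 : 0 ≤ Real.sqrt K := Real.sqrt_nonneg _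
    have key : 1 / Real.sqrt ((K:ℝ)+1) ≤ 2 * Real.sqrt ((K:ℝ)+1) - 2 * Real.sqrt K := by
      rw [div_le_iff₀ hy0]
      nlinarith [sq_nonneg (Real.sqrt ((K:ℝ)+1) - Real.sqrt K)]
    push_cast
    linarith [ih, key]

lemma aux_rank_sum (S : Finset ℕ) :
    ∑ t ∈ S, (1:ℝ) / Real.sqrt ((S.filter (fun τ => τ ≤ t)).card) ≤ 2 * Real.sqrt S.card := by
  classical
  set r : ℕ → ℕ := fun t => (S.filter (fun τ => τ ≤ t)).card with hr
  have hinj : ∀ a ∈ S, ∀ b ∈ S, r a = r b → a = b := by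
    have key : ∀ a b : ℕ, a ∈ S → b ∈ S → a < b → r a < r b := by
      intro a b ha hb hab
      have hsub : S.filter (fun τ => τ ≤ a) ⊆ S.filter (fun τ => τ ≤ b) := by
        intro τ hτ
        simp only [Finset.mem_filter] at hτ ⊢
        exact ⟨hτ.1, hτ.2.trans hab.le⟩
      have hbmem : b ∈ S.filter (fun τ => τ ≤ b) := Finset.mem_filter.mpr ⟨hb, le_refl b⟩
      have hbnot : b ∉ S.filter (fun τ => τ ≤ a) := by
        simp only [Finset.mem_filter, not_and]
        intro _; omega
      exact Finset.card_lt_card ((Finset.ssubset_iff_of_subset hsub).mpr ⟨b, hbmem, hbnot⟩)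
    intro a ha b hb hab
    rcases lt_trichotomy a b with h | h | h
    · exact absurd hab (key a b ha hb h).ne
    · exact h
    · exact absurd hab.symm (key b a hb ha h).ne
  have himg : S.image r ⊆ Finset.Icc 1 S.card := by
    intro j hj
    simp only [Finset.mem_image] at hj
    obtain ⟨t, ht, rfl⟩ := hj
    refine Finset.mem_Icc.mpr ⟨?_, Finset.card_le_card (Finset.filter_subset _ _)⟩
    exact Finset.card_pos.mpr ⟨t, Finset.mem_filter.mpr ⟨ht, le_refl t⟩⟩
  have h1 : ∑ j ∈ S.image r, (1:ℝ)/Real.sqrt j = ∑ t ∈ S, (1:ℝ)/Real.sqrt (r t) :=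
    Finset.sum_image hinj
  rw [← h1]
  exact le_trans (Finset.sum_le_sum_of_subset_of_nonneg himg (by intros; positivity))
    (aux_sum_inv_sqrt _)

lemma aux_cs {N : ℕ} (K : Fin N → ℕ) :
    ∑ n, Real.sqrt (K n) ≤ Real.sqrt (N * ∑ n, (K n : ℝ)) := by
  have h := Real.sum_sqrt_mul_sqrt_le (Finset.univ : Finset (Fin N))
    (f := fun _ => (1:ℝ)) (g := fun n => (K n : ℝ)) (fun _ => zero_le_one)
    (fun n => by positivity)
  simpa [Real.sqrt_mul (by positivity : (0:ℝ) ≤ (N:ℝ))] using h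


open Finset MeasureTheory

/-- **Min-Width regret bound.** Suppose the concentration event
`{∀ n, t : |μ̂_{t,n} − μ_n| < ε_{t,n}}` (for pulled arms, where
`ε_{t,n} = √(ln(2N·G(T,A)/δ)/(2 ∑_a (s a)² c_{t,a,n}))`) holds with probability
greater than `1 − δ`, each agent pulls exactly one distinct arm per step, unpulled
arms have (effectively infinite) UCB exceeding `1`, and the algorithm selects at each
time the injective assignment maximizing `∑ a, s a · UCB t (f a)`. Then with
probability greater than `1 − δ`, the cumulative regret satisfies
`R_T < A(N−1) + 2√(2·A·N·T·ln(2N·G(T,A)/δ)) · (max S / min S)`,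
where `G(T,A) = ∑_{t=1}^T C(t+A−1, A−1)`. -/
theorem min_width_regret_bound
    {Ω : Type*} [MeasurableSpace Ω] (ℙ : Measure Ω) [IsProbabilityMeasure ℙ]
    (N A T : ℕ) (hA : 0 < A) (hAN : A ≤ N) (hNT : N ≤ T)
    (μ : Fin N → ℝ) (hμ : ∀ n, μ n ∈ Set.Ioo (0 : ℝ) 1)
    (s : Fin A → ℝ) (hs : ∀ a, s a ∈ Set.Ioc (0 : ℝ) 1)
    (smax smin : ℝ) (hsmax : IsGreatest (Set.range s) smax)
    (hsmin : IsLeast (Set.range s) smin)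
    (δ : ℝ) (hδ : δ ∈ Set.Ioo (0 : ℝ) 1)
    (G : ℕ) (hG : G = ∑ t ∈ Finset.Icc 1 T, Nat.choose (t + A - 1) (A - 1))
    -- the (random) assignments of agents to arms, injective at each time step
    (f : Ω → ℕ → Fin A → Fin N)
    (hfinj : ∀ ω t, Function.Injective (f ω t))
    -- cumulative pull counts of arm `n` by agent `a` through time `t`
    (c : Ω → ℕ → Fin A → Fin N → ℕ)
    (hc : ∀ ω t a n, c ω t a n = ∑ τ ∈ Finset.Icc 1 t, if f ω τ a = n then 1 else 0)
    -- the sensitivity-weighted empirical means and confidence widths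
    (μhat : Ω → ℕ → Fin N → ℝ)
    (ε : Ω → ℕ → Fin N → ℝ)
    (hε : ∀ ω t n, ε ω t n = Real.sqrt (Real.log (2 * N * G / δ)
      / (2 * ∑ a, (s a) ^ 2 * (c ω t a n : ℝ))))
    -- the upper confidence bounds: `μ̂ + ε` for pulled arms, effectively `∞` otherwise
    (UCB : Ω → ℕ → Fin N → ℝ)
    (hUCB : ∀ ω t n, 0 < ∑ a, c ω t a n → UCB ω t n = μhat ω t n + ε ω t n)
    (hUCBinf : ∀ ω t n, ∑ a, c ω t a n = 0 → 1 < UCB ω t n)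
    -- the algorithm selects the injective assignment maximizing `∑ a, s a · UCB`
    (hmax : ∀ ω, ∀ t ∈ Finset.Icc 1 T, ∀ g : Fin A → Fin N, Function.Injective g →
      ∑ a, s a * UCB ω t (g a) ≤ ∑ a, s a * UCB ω t (f ω t a))
    -- the optimal assignment
    (fstar : Fin A → Fin N) (hfstar : Function.Injective fstar)
    (hopt : ∀ g : Fin A → Fin N, Function.Injective g →
      ∑ a, s a * μ (g a) ≤ ∑ a, s a * μ (fstar a))
    -- the concentration event holds with probability greater than `1 − δ`
    (hconc : ENNReal.ofReal (1 - δ) <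
      ℙ {ω | ∀ n, ∀ t ∈ Finset.Icc 1 T, 0 < ∑ a, c ω t a n →
        |μhat ω t n - μ n| < ε ω t n}) :
    ENNReal.ofReal (1 - δ) <
      ℙ {ω | (∑ t ∈ Finset.Icc 1 T, ∑ a, s a * (μ (fstar a) - μ (f ω t a)))
        < A * (N - 1) + 2 * Real.sqrt (2 * A * N * T * Real.log (2 * N * G / δ))
            * (smax / smin)} := by

  classical
  refine hconc.trans_le (measure_mono ?_)
  intro ω hω
  simp only [Set.mem_setOf_eq] at hω ⊢
  have hN1 : 1 ≤ N := hA.trans_le hAN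
  have hT1 : 1 ≤ T := hN1.trans hNT
  obtain ⟨hδ0, hδ1⟩ := hδ
  have hsminpos : 0 < smin := by
    obtain ⟨a₀, ha₀⟩ := hsmin.1
    rw [← ha₀]; exact (hs a₀).1
  have hsminmax : smin ≤ smax := hsmin.2 hsmax.1
  have hsmaxpos : 0 < smax := hsminpos.trans_le hsminmax
  have hG1 : 1 ≤ G := by
    rw [hG]
    have hmem : T ∈ Finset.Icc 1 T := Finset.mem_Icc.mpr ⟨hT1, le_refl T⟩
    have h1 : 0 < Nat.choose (T + A - 1) (A - 1) := Nat.choose_pos (by omega)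
    exact le_trans h1 (Finset.single_le_sum (f := fun t => Nat.choose (t + A - 1) (A - 1)) (fun i _ => Nat.zero_le _) hmem)
  set L := Real.log (2 * N * G / δ) with hLdef
  have hLpos : 0 < L := by
    apply Real.log_pos
    rw [one_lt_div hδ0]
    have h1 : (1:ℝ) ≤ (N:ℝ) := by exact_mod_cast hN1
    have h2 : (1:ℝ) ≤ (G:ℝ) := by exact_mod_cast hG1
    nlinarith
  set m : ℕ → Fin N → ℕ :=
    fun t n => ((Finset.Icc 1 t).filter (fun τ => ∃ a', f ω τ a' = n)).card with hmdef
  have hcount : ∀ τ (n : Fin N), (∑ a' : Fin A, if f ω τ a' = n then (1:ℕ) else 0)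
      = if ∃ a', f ω τ a' = n then 1 else 0 := by
    intro τ n
    rw [← Finset.card_filter]
    split_ifs with h
    · obtain ⟨a', ha'⟩ := h
      rw [Finset.card_eq_one]
      refine ⟨a', ?_⟩
      ext b
      simp only [Finset.mem_filter, Finset.mem_univ, true_and, Finset.mem_singleton]
      constructor
      · intro hb; exact hfinj ω τ (hb.trans ha'.symm)
      · rintro rfl; exact ha'
    · simp only [Finset.card_eq_zero, Finset.filter_eq_empty_iff]
      exact fun b _ hb => h ⟨b, hb⟩
  have hm_eq : ∀ t (n : Fin N), (∑ a', c ω t a' n) = m t n := by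
    intro t n
    simp only [hc, hmdef]
    rw [Finset.sum_comm, Finset.card_filter]
    exact Finset.sum_congr rfl fun τ _ => hcount τ n
  have hm_pos : ∀ t ∈ Finset.Icc 1 T, ∀ a : Fin A, 0 < m t (f ω t a) := by
    intro t ht a
    apply Finset.card_pos.mpr
    refine ⟨t, Finset.mem_filter.mpr ⟨?_, ⟨a, rfl⟩⟩⟩
    simp only [Finset.mem_Icc] at ht ⊢; omega
  have hc_pos : ∀ t ∈ Finset.Icc 1 T, ∀ a : Fin A, 0 < ∑ a', c ω t a' (f ω t a) := by
    intro t ht a; rw [hm_eq]; exact hm_pos t ht a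
  -- per-step regret bound
  have hstep : ∀ t ∈ Finset.Icc 1 T,
      (∑ a, s a * (μ (fstar a) - μ (f ω t a))) < 2 * ∑ a, s a * ε ω t (f ω t a) := by
    intro t ht
    have h1 : ∑ a, s a * μ (fstar a) ≤ ∑ a, s a * UCB ω t (fstar a) := by
      refine Finset.sum_le_sum fun a _ => ?_
      have hsa := (hs a).1
      refine mul_le_mul_of_nonneg_left ?_ hsa.le
      by_cases hp : 0 < ∑ a', c ω t a' (fstar a)
      · have habs := hω (fstar a) t ht hp
        rw [hUCB ω t _ hp]
        have := (abs_lt.mp habs).1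
        linarith
      · have h0 : ∑ a', c ω t a' (fstar a) = 0 := by omega
        have := hUCBinf ω t (fstar a) h0
        linarith [(hμ (fstar a)).2]
    have h2 := hmax ω t ht fstar hfstar
    have h3 : ∑ a, s a * UCB ω t (f ω t a)
        < ∑ a, s a * (μ (f ω t a) + 2 * ε ω t (f ω t a)) := by
      have : Nonempty (Fin A) := ⟨⟨0, hA⟩⟩
      refine Finset.sum_lt_sum_of_nonempty Finset.univ_nonempty fun a _ => ?_
      have hsa := (hs a).1
      have hp := hc_pos t ht a
      have habs := hω (f ω t a) t ht hp
      rw [hUCB ω t _ hp]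
      have h4 := (abs_lt.mp habs).2
      have h5 : μhat ω t (f ω t a) + ε ω t (f ω t a)
          < μ (f ω t a) + 2 * ε ω t (f ω t a) := by linarith
      exact mul_lt_mul_of_pos_left h5 hsa
    have hexp : ∑ a, s a * (μ (f ω t a) + 2 * ε ω t (f ω t a))
        = ∑ a, s a * μ (f ω t a) + 2 * ∑ a, s a * ε ω t (f ω t a) := by
      rw [Finset.mul_sum, ← Finset.sum_add_distrib]
      exact Finset.sum_congr rfl fun a _ => by ring
    have hexp2 : ∑ a, s a * (μ (fstar a) - μ (f ω t a))
        = ∑ a, s a * μ (fstar a) - ∑ a, s a * μ (f ω t a) := by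
      rw [← Finset.sum_sub_distrib]
      exact Finset.sum_congr rfl fun a _ => by ring
    rw [hexp2]; rw [hexp] at h3; linarith
  -- bound each width
  have hεle : ∀ t ∈ Finset.Icc 1 T, ∀ a : Fin A, s a * ε ω t (f ω t a)
      ≤ smax / smin * Real.sqrt (L / 2) * (1 / Real.sqrt (m t (f ω t a))) := by
    intro t ht a
    set n := f ω t a with hn
    have hmp : 0 < m t n := hm_pos t ht a
    have hmR : (1:ℝ) ≤ (m t n : ℝ) := by exact_mod_cast hmp
    have hden : 2 * (smin ^ 2 * (m t n : ℝ)) ≤ 2 * ∑ a', (s a') ^ 2 * (c ω t a' n : ℝ) := by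
      have hcast : ((∑ a', c ω t a' n : ℕ) : ℝ) = (m t n : ℝ) := by rw [hm_eq]
      have key : smin ^ 2 * (m t n : ℝ) ≤ ∑ a', (s a') ^ 2 * (c ω t a' n : ℝ) := by
        calc smin ^ 2 * (m t n : ℝ) = ∑ a', smin ^ 2 * (c ω t a' n : ℝ) := by
              rw [← Finset.mul_sum, ← hcast]; push_cast; ring
          _ ≤ ∑ a', (s a') ^ 2 * (c ω t a' n : ℝ) := by
              refine Finset.sum_le_sum fun a' _ => ?_
              have hs' : smin ≤ s a' := hsmin.2 ⟨a', rfl⟩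
              have hcn : (0:ℝ) ≤ (c ω t a' n : ℝ) := by positivity
              have hsq : smin ^ 2 ≤ s a' ^ 2 := by nlinarith
              exact mul_le_mul_of_nonneg_right hsq hcn
      linarith
    have hdenpos : 0 < 2 * (smin ^ 2 * (m t n : ℝ)) := by positivity
    have hε1 : ε ω t n ≤ Real.sqrt (L / (2 * (smin ^ 2 * (m t n : ℝ)))) := by
      rw [hε]
      apply Real.sqrt_le_sqrt
      gcongr
    have hsqrt_eq : Real.sqrt (L / (2 * (smin ^ 2 * (m t n : ℝ))))
        = Real.sqrt (L / 2) * (1 / (smin * Real.sqrt (m t n))) := by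
      rw [show L / (2 * (smin ^ 2 * ((m t n : ℕ) : ℝ)))
          = L / 2 * (smin ^ 2 * ((m t n : ℕ) : ℝ))⁻¹ by ring]
      rw [Real.sqrt_mul (by positivity), Real.sqrt_inv,
        Real.sqrt_mul (by positivity), Real.sqrt_sq hsminpos.le]
      ring
    have hεnn : 0 ≤ ε ω t n := by rw [hε]; exact Real.sqrt_nonneg _
    calc s a * ε ω t n
        ≤ smax * (Real.sqrt (L / 2) * (1 / (smin * Real.sqrt (m t n)))) :=
          mul_le_mul (hsmax.2 ⟨a, rfl⟩) (hε1.trans_eq hsqrt_eq) hεnn hsmaxpos.le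
      _ = smax / smin * Real.sqrt (L / 2) * (1 / Real.sqrt (m t n)) := by ring
  -- the combinatorial double-sum bound
  set Sn : Fin N → Finset ℕ :=
    fun n => (Finset.Icc 1 T).filter (fun τ => ∃ a', f ω τ a' = n) with hSn
  have hmS : ∀ n : Fin N, ∀ t ∈ Sn n, m t n = ((Sn n).filter (fun τ => τ ≤ t)).card := by
    intro n t ht
    have htT : 1 ≤ t ∧ t ≤ T := by
      have := (Finset.mem_filter.mp ht).1
      simpa [Finset.mem_Icc] using this
    simp only [hmdef, hSn]
    congr 1
    ext τ
    simp only [Finset.mem_filter, Finset.mem_Icc]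
    constructor
    · rintro ⟨⟨h1, h2⟩, h3⟩
      exact ⟨⟨⟨h1, h2.trans htT.2⟩, h3⟩, h2⟩
    · rintro ⟨⟨⟨h1, _⟩, h3⟩, h4⟩
      exact ⟨⟨h1, h4⟩, h3⟩
  have hswap : ∑ t ∈ Finset.Icc 1 T, ∑ a : Fin A, (1:ℝ) / Real.sqrt (m t (f ω t a))
      = ∑ n : Fin N, ∑ t ∈ Sn n, (1:ℝ) / Real.sqrt (m t n) := by
    have step1 : ∀ t ∈ Finset.Icc 1 T, ∑ a : Fin A, (1:ℝ) / Real.sqrt (m t (f ω t a))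
        = ∑ n : Fin N, if t ∈ Sn n then (1:ℝ) / Real.sqrt (m t n) else 0 := by
      intro t ht
      have himage := Finset.sum_image (s := (Finset.univ : Finset (Fin A))) (g := f ω t)
        (f := fun n : Fin N => (1:ℝ) / Real.sqrt (m t n)) (fun a _ b _ h => hfinj ω t h)
      rw [← himage, ← Finset.sum_filter]
      congr 1
      ext n
      simp only [Finset.mem_image, Finset.mem_univ, true_and, Finset.mem_filter, hSn,
        Finset.mem_Icc]
      constructor
      · rintro ⟨a, rfl⟩
        have := Finset.mem_Icc.mp ht
        exact ⟨⟨this.1, this.2⟩, a, rfl⟩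
      · rintro ⟨-, a, rfl⟩
        exact ⟨a, rfl⟩
    calc ∑ t ∈ Finset.Icc 1 T, ∑ a : Fin A, (1:ℝ) / Real.sqrt (m t (f ω t a))
        = ∑ t ∈ Finset.Icc 1 T, ∑ n : Fin N,
            (if t ∈ Sn n then (1:ℝ) / Real.sqrt (m t n) else 0) :=
          Finset.sum_congr rfl step1
      _ = ∑ n : Fin N, ∑ t ∈ Finset.Icc 1 T,
            (if t ∈ Sn n then (1:ℝ) / Real.sqrt (m t n) else 0) := Finset.sum_comm
      _ = ∑ n : Fin N, ∑ t ∈ Sn n, (1:ℝ) / Real.sqrt (m t n) := by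
          refine Finset.sum_congr rfl fun n _ => ?_
          rw [Finset.sum_ite_mem]
          congr 1
          rw [Finset.inter_eq_right]
          simp only [hSn]
          exact Finset.filter_subset _ _
  have hper : ∀ n : Fin N, ∑ t ∈ Sn n, (1:ℝ) / Real.sqrt (m t n)
      ≤ 2 * Real.sqrt ((Sn n).card) := by
    intro n
    have heq : ∑ t ∈ Sn n, (1:ℝ) / Real.sqrt (m t n)
        = ∑ t ∈ Sn n, (1:ℝ) / Real.sqrt (((Sn n).filter (fun τ => τ ≤ t)).card) :=
      Finset.sum_congr rfl fun t ht => by rw [hmS n t ht]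
    rw [heq]
    exact aux_rank_sum (Sn n)
  have hKsum : ∑ n : Fin N, (((Sn n).card : ℕ) : ℝ) = (A : ℝ) * T := by
    have hcard : ∀ n : Fin N, (Sn n).card = m T n := fun n => rfl
    have hnat : ∑ n : Fin N, m T n = A * T := by
      have h1 : ∑ n : Fin N, ∑ a' : Fin A, c ω T a' n = ∑ n : Fin N, m T n :=
        Finset.sum_congr rfl fun n _ => hm_eq T n
      rw [← h1, Finset.sum_comm]
      have h2 : ∀ a : Fin A, ∑ n : Fin N, c ω T a n = T := by
        intro a
        simp only [hc]
        rw [Finset.sum_comm]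
        have h3 : ∀ τ, ∑ n : Fin N, (if f ω τ a = n then (1:ℕ) else 0) = 1 := by
          intro τ
          rw [Finset.sum_ite_eq]
          simp
        rw [Finset.sum_congr rfl fun τ _ => h3 τ, Finset.sum_const, Nat.card_Icc]
        simp
      rw [Finset.sum_congr rfl fun a _ => h2 a, Finset.sum_const]
      simp [mul_comm]
    have : ∑ n : Fin N, (((Sn n).card : ℕ) : ℝ) = ((∑ n : Fin N, m T n : ℕ) : ℝ) := by
      push_cast
      exact Finset.sum_congr rfl fun n _ => by rw [hcard]
    rw [this, hnat]
    push_cast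
    ring
  have hcomb : ∑ t ∈ Finset.Icc 1 T, ∑ a : Fin A, (1:ℝ) / Real.sqrt (m t (f ω t a))
      ≤ 2 * Real.sqrt ((N:ℝ) * ((A:ℝ) * T)) := by
    rw [hswap]
    calc ∑ n : Fin N, ∑ t ∈ Sn n, (1:ℝ) / Real.sqrt (m t n)
        ≤ ∑ n : Fin N, 2 * Real.sqrt ((Sn n).card) := Finset.sum_le_sum fun n _ => hper n
      _ = 2 * ∑ n : Fin N, Real.sqrt ((Sn n).card) := by rw [Finset.mul_sum]
      _ ≤ 2 * Real.sqrt ((N:ℝ) * ∑ n : Fin N, (((Sn n).card : ℕ) : ℝ)) := by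
          have := aux_cs (fun n => (Sn n).card)
          linarith
      _ = 2 * Real.sqrt ((N:ℝ) * ((A:ℝ) * T)) := by rw [hKsum]
  -- assemble
  have hfinal1 : (∑ t ∈ Finset.Icc 1 T, ∑ a, s a * (μ (fstar a) - μ (f ω t a)))
      < ∑ t ∈ Finset.Icc 1 T, 2 * ∑ a, s a * ε ω t (f ω t a) := by
    refine Finset.sum_lt_sum_of_nonempty ⟨1, ?_⟩ hstep
    simp only [Finset.mem_Icc]; omega
  have hfinal2 : ∑ t ∈ Finset.Icc 1 T, 2 * ∑ a, s a * ε ω t (f ω t a)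
      ≤ 2 * (smax / smin * Real.sqrt (L / 2)) * (2 * Real.sqrt ((N:ℝ) * ((A:ℝ) * T))) := by
    calc ∑ t ∈ Finset.Icc 1 T, 2 * ∑ a, s a * ε ω t (f ω t a)
        ≤ ∑ t ∈ Finset.Icc 1 T, 2 * ∑ a : Fin A,
            smax / smin * Real.sqrt (L / 2) * (1 / Real.sqrt (m t (f ω t a))) := by
          refine Finset.sum_le_sum fun t ht => ?_
          have := Finset.sum_le_sum (fun a (_ : a ∈ Finset.univ) => hεle t ht a)
          linarith
      _ = 2 * (smax / smin * Real.sqrt (L / 2))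
            * ∑ t ∈ Finset.Icc 1 T, ∑ a : Fin A, (1 / Real.sqrt (m t (f ω t a))) := by
          rw [Finset.mul_sum]
          refine Finset.sum_congr rfl fun t _ => ?_
          rw [Finset.mul_sum, Finset.mul_sum]
          exact Finset.sum_congr rfl fun a _ => by ring
      _ ≤ 2 * (smax / smin * Real.sqrt (L / 2)) * (2 * Real.sqrt ((N:ℝ) * ((A:ℝ) * T))) := by
          have h2B : 0 ≤ 2 * (smax / smin * Real.sqrt (L / 2)) := by positivity
          exact mul_le_mul_of_nonneg_left hcomb h2B
  have hident : 2 * (smax / smin * Real.sqrt (L / 2)) * (2 * Real.sqrt ((N:ℝ) * ((A:ℝ) * T)))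
      = 2 * Real.sqrt (2 * A * N * T * L) * (smax / smin) := by
    rw [show (2:ℝ) * A * N * T * L = 4 * (L / 2 * ((N:ℝ) * ((A:ℝ) * T))) by push_cast; ring]
    rw [Real.sqrt_mul (by norm_num : (0:ℝ) ≤ 4),
      Real.sqrt_mul (by positivity : (0:ℝ) ≤ L / 2)]
    rw [show Real.sqrt 4 = 2 by
      rw [show (4:ℝ) = 2 ^ 2 by norm_num, Real.sqrt_sq (by norm_num : (0:ℝ) ≤ 2)]]
    ring
  have hAN1 : 0 ≤ (A:ℝ) * ((N:ℝ) - 1) := by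
    have h1 : (1:ℝ) ≤ (N:ℝ) := by exact_mod_cast hN1
    have h2 : (0:ℝ) ≤ (A:ℝ) := by positivity
    nlinarith
  have hmain : (∑ t ∈ Finset.Icc 1 T, ∑ a, s a * (μ (fstar a) - μ (f ω t a)))
      < 2 * Real.sqrt (2 * A * N * T * L) * (smax / smin) := by
    rw [← hident]
    exact hfinal1.trans_le hfinal2
  linarith
end
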